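/- A bounded subharmonic function on ℂ∖{w₀} whose logarithm is harmonic on the set where it is positive, and which is bounded above near w₀ and at infinity, is constant. -/

import Mathlib

/-- A function is subharmonic on an open set `S` if it is upper semicontinuous on `S`
and satisfies the sub-mean value inequality on circles whose closed disks lie in `S`. -/
def SubharmonicOn (u : ℂ → ℝ) (S : Set ℂ) : Prop :=
  UpperSemicontinuousOn u S ∧
  ∀ c : ℂ, ∀ r : ℝ, 0 < r → Metric.closedBall c r ⊆ S →
    u c ≤ (2 * Real.pi)⁻¹ * ∫ θ in (0:ℝ)..(2 * Real.pi), u (circleMap c r θ)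

/-- A function is harmonic on `S` if it is continuous on `S` and satisfies the mean
value equality on circles whose closed disks lie in `S`. -/
def HarmonicOnSet (h : ℂ → ℝ) (S : Set ℂ) : Prop :=
  ContinuousOn h S ∧
  ∀ c : ℂ, ∀ r : ℝ, 0 < r → Metric.closedBall c r ⊆ S →
    h c = (2 * Real.pi)⁻¹ * ∫ θ in (0:ℝ)..(2 * Real.pi), h (circleMap c r θ)

/-!
Let `p` maximise `u` on the unit circle about `w₀` and let `M` bound `u`. On the annulus between
this circle and the circle of radius `s`, the maximum principle compares `u` with the harmonic
function `u p + (M - u p) log ‖z - w₀‖ / log s`, which is `u p` on the first circle and `M` on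
the second. Letting `s → ∞` (or `s → 0` inside the unit circle) shows that `u p` is the global
maximum of `u`, and the strong maximum principle on the connected set `ℂ ∖ {w₀}` then forces
`u` to be constant.
-/

open Metric Set Real Filter MeasureTheory

theorem UpperSemicontinuous.intervalIntegrable {g : ℝ → ℝ} (hg : UpperSemicontinuous g)
    (hbdd : BddBelow (range g)) (a b : ℝ) : IntervalIntegrable g volume a b := by
  obtain ⟨m, hm⟩ := hbdd
  obtain ⟨M, hM⟩ := (hg.upperSemicontinuousOn (uIcc a b)).bddAbove_of_isCompact isCompact_uIcc
  refine (intervalIntegrable_const (c := max M (-m))).mono_fun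
    hg.measurable.aestronglyMeasurable ?_
  filter_upwards [ae_restrict_mem measurableSet_uIoc] with θ hθ
  have hle := hM (mem_image_of_mem g (uIoc_subset_uIcc hθ))
  have hge := hm (mem_range_self θ)
  simp only [Real.norm_eq_abs]
  exact abs_le_abs (le_max_of_le_left hle) (by linarith [le_max_right M (-m)])

theorem UpperSemicontinuousOn.circleIntegrable {f : ℂ → ℝ} {c : ℂ} {R : ℝ}
    (hf : UpperSemicontinuousOn f (sphere c |R|)) (hbdd : BddBelow (f '' sphere c |R|)) :
    CircleIntegrable f c R :=
  UpperSemicontinuous.intervalIntegrable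
    (upperSemicontinuousOn_univ_iff.1 <|
      hf.comp (continuous_circleMap c R).continuousOn fun θ _ => circleMap_mem_sphere' c R θ)
    (hbdd.mono <| by rintro _ ⟨θ, rfl⟩; exact mem_image_of_mem f (circleMap_mem_sphere' c R θ)) _ _

theorem circleAverage_lt_of_upperSemicontinuousOn {f : ℂ → ℝ} {c z : ℂ} {R m : ℝ}
    (hf : UpperSemicontinuousOn f (sphere c |R|)) (hbdd : BddBelow (f '' sphere c |R|))
    (hle : ∀ w ∈ sphere c |R|, f w ≤ m) (hz : z ∈ sphere c |R|) (hlt : f z < m) :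
    circleAverage f c R < m := by
  obtain ⟨θ₀, rfl⟩ : z ∈ range (circleMap c R) := (range_circleMap c R).symm ▸ hz
  -- rotate the parametrisation so that `z` sits at the interior angle `π`
  set g : ℝ → ℝ := fun θ => f (circleMap c R (θ + (θ₀ - π)))
  have hmaps : ∀ θ, circleMap c R (θ + (θ₀ - π)) ∈ sphere c |R| :=
    fun θ => circleMap_mem_sphere' c R _
  have hg : UpperSemicontinuous g := upperSemicontinuousOn_univ_iff.1 <|
    hf.comp (by fun_prop) fun θ _ => hmaps θ
  have hgi : IntervalIntegrable g volume 0 (2 * π) := hg.intervalIntegrable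
    (hbdd.mono <| by rintro _ ⟨θ, rfl⟩; exact mem_image_of_mem f (hmaps θ)) _ _
  have hopen : IsOpen {θ | g θ < m} := hg.isOpen_preimage m
  have hpos : 0 < volume ({θ | g θ < m} ∩ Ioo 0 (2 * π)) :=
    (hopen.inter isOpen_Ioo).measure_pos volume
      ⟨π, by simpa [g] using hlt, pi_pos, by linarith [pi_pos]⟩
  have hint : ∫ θ in (0:ℝ)..2 * π, g θ < ∫ _ in (0:ℝ)..2 * π, m := by
    refine intervalIntegral.integral_lt_integral_of_ae_le_of_measure_setOfPred_lt_ne_zero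
      two_pi_pos.le hgi intervalIntegrable_const (ae_of_all _ fun θ => hle _ (hmaps θ)) ?_
    rw [Measure.restrict_apply hopen.measurableSet]
    exact (hpos.trans_le (measure_mono (inter_subset_inter_right _ Ioo_subset_Ioc_self))).ne'
  rw [circleAverage_eq_integral_add (θ₀ - π), smul_eq_mul]
  rw [intervalIntegral.integral_const, smul_eq_mul, sub_zero] at hint
  calc (2 * π)⁻¹ * ∫ θ in (0:ℝ)..2 * π, g θ < (2 * π)⁻¹ * (2 * π * m) := by gcongr
    _ = m := by field_simp

theorem mul_exp_mem_uIcc {r k : ℝ} (hr : 0 ≤ r) (hk : 1 ≤ k) (ℓ : ℝ) :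
    r * exp ℓ ∈ uIcc r (r * exp (k * ℓ)) := by
  rcases le_total 0 ℓ with hℓ | hℓ
  · exact Icc_subset_uIcc ⟨le_mul_of_one_le_right hr (one_le_exp hℓ),
      mul_le_mul_of_nonneg_left (exp_le_exp.2 (by nlinarith)) hr⟩
  · exact Icc_subset_uIcc' ⟨mul_le_mul_of_nonneg_left (exp_le_exp.2 (by nlinarith)) hr,
      mul_le_of_le_one_right hr (exp_le_one_iff.2 hℓ)⟩

theorem circleAverage_log_norm_sub_const_of_lt {c a : ℂ} {r : ℝ} (hr : 0 < r) (ha : r < ‖c - a‖) :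
    circleAverage (log ‖· - a‖) c r = log ‖c - a‖ := by
  have hr_lt : 1 ≤ |r⁻¹ * ‖c - a‖| := by
    rw [abs_of_pos (mul_pos (inv_pos.2 hr) (hr.trans ha)), ← div_eq_inv_mul, one_le_div hr]
    exact ha.le
  rw [circleAverage_log_norm_sub_const_eq_log_radius_add_posLog hr.ne', posLog_eq_log hr_lt,
    log_mul (inv_ne_zero hr.ne') (hr.trans ha).ne', log_inv]
  ring

theorem harmonicOnSet_const_add_mul_log_norm_sub (a b : ℝ) (w₀ : ℂ) :
    HarmonicOnSet (fun z => a + b * log ‖z - w₀‖) {w₀}ᶜ := by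
  refine ⟨fun z hz => ?_, fun c r hr hball => ?_⟩
  · exact (continuousAt_const.add (continuousAt_const.mul
      ((continuous_norm.comp (continuous_sub_right w₀)).continuousAt.log
        (norm_ne_zero_iff.2 (sub_ne_zero.2 hz))))).continuousWithinAt
  · have hfar : r < ‖c - w₀‖ := by
      by_contra! h
      exact hball (mem_closedBall.2 (by rwa [dist_comm, dist_eq_norm])) rfl
    have hlog : CircleIntegrable (fun z => b • log ‖z - w₀‖) c r :=
      (circleIntegrable_log_norm_sub_const r).const_smul
    change a + b * log ‖c - w₀‖ = circleAverage (fun z => a + b • log ‖z - w₀‖) c r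
    rw [circleAverage_fun_add (circleIntegrable_const a c r) hlog, circleAverage_const,
      circleAverage_fun_smul, circleAverage_log_norm_sub_const_of_lt hr hfar, smul_eq_mul]

namespace SubharmonicOn

variable {u : ℂ → ℝ} {S : Set ℂ} {w₀ : ℂ}

theorem eq_of_isMaxOn_closedBall (hu : SubharmonicOn u S) {a : ℂ} {r : ℝ}
    (hball : closedBall a r ⊆ S) (hbdd : BddBelow (u '' closedBall a r))
    (hmax : IsMaxOn u (closedBall a r) a) {z : ℂ} (hz : z ∈ closedBall a r) : u z = u a := by
  by_contra hne
  have hlt : u z < u a := (hmax hz).lt_of_ne hne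
  have hza : 0 < dist z a := dist_pos.2 fun h => hne (h ▸ rfl)
  set ρ := dist z a
  have hsphere : sphere a |ρ| ⊆ closedBall a r := by
    rw [abs_of_pos hza]; exact sphere_subset_closedBall.trans (closedBall_subset_closedBall hz)
  have hmean : u a ≤ circleAverage u a ρ :=
    hu.2 a ρ hza ((closedBall_subset_closedBall hz).trans hball)
  have := circleAverage_lt_of_upperSemicontinuousOn (hu.1.mono (hsphere.trans hball))
    (hbdd.mono (image_mono hsphere)) (fun w hw => hmax (hsphere hw))
    (by rw [abs_of_pos hza]; exact mem_sphere.2 rfl) hlt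
  linarith

theorem le_of_forall_mem_frontier_le (hu : SubharmonicOn u S) {K : Set ℂ} (hK : IsCompact K)
    (hKS : K ⊆ S) (hbdd : BddBelow (u '' K)) {C : ℝ} (hC : ∀ z ∈ frontier K, u z ≤ C)
    {z : ℂ} (hz : z ∈ K) : u z ≤ C := by
  by_contra! hCz
  have husc : UpperSemicontinuousOn u K := hu.1.mono hKS
  obtain ⟨x₁, hx₁, hmax₁⟩ := husc.exists_isMaxOn ⟨z, hz⟩ hK
  -- among the maximisers, one with largest imaginary part cannot be interior
  obtain ⟨x₀, ⟨hx₀K, hx₀max⟩, hx₀im⟩ :=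
    (husc.isCompact_inter_preimage_Ici hK (u x₁)).exists_isMaxOn ⟨x₁, hx₁, le_refl (u x₁)⟩
      Complex.continuous_im.continuousOn
  have hmax₀ : IsMaxOn u K x₀ := isMaxOn_iff.2 fun y hy => (isMaxOn_iff.1 hmax₁ y hy).trans hx₀max
  have hx₀int : x₀ ∈ interior K := by
    rw [← self_sdiff_frontier]
    exact ⟨hx₀K, fun hfr => (hC x₀ hfr).not_gt (hCz.trans_le (hmax₀ hz))⟩
  obtain ⟨r, hr, hball⟩ := nhds_basis_closedBall.mem_iff.1 (mem_interior_iff_mem_nhds.1 hx₀int)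
  have hup : x₀ + r * Complex.I ∈ closedBall x₀ r := by
    simp [abs_of_pos hr]
  have heq := hu.eq_of_isMaxOn_closedBall (hball.trans hKS) (hbdd.mono (image_mono hball))
    (hmax₀.on_subset hball) hup
  have hle : (x₀ + r * Complex.I).im ≤ x₀.im :=
    hx₀im ⟨hball hup, show u x₁ ≤ u (x₀ + r * Complex.I) by rw [heq]; exact hx₀max⟩
  simp only [Complex.add_im, Complex.mul_im, Complex.ofReal_re, Complex.ofReal_im, Complex.I_re,
    Complex.I_im] at hle
  linarith

theorem eq_of_isMaxOn (hu : SubharmonicOn u S) (hS : IsOpen S) (hconn : IsPreconnected S)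
    (hbdd : BddBelow (u '' S)) {p : ℂ} (hp : p ∈ S) (hmax : IsMaxOn u S p) {z : ℂ}
    (hz : z ∈ S) : u z = u p := by
  have hle : ∀ y ∈ S, u y ≤ u p := fun y hy => hmax hy
  have hEq : IsOpen {y ∈ S | u y = u p} := by
    refine isOpen_iff_mem_nhds.2 fun y ⟨hyS, hy⟩ => ?_
    obtain ⟨r, hr, hball⟩ := nhds_basis_closedBall.mem_iff.1 (hS.mem_nhds hyS)
    refine mem_of_superset (closedBall_mem_nhds y hr) fun w hw => ⟨hball hw, ?_⟩
    rw [← hy]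
    exact hu.eq_of_isMaxOn_closedBall hball (hbdd.mono (image_mono hball))
      (fun w hw => hy ▸ hle w (hball hw)) hw
  have hLt : IsOpen {y ∈ S | u y < u p} := by
    refine isOpen_iff_mem_nhds.2 fun y ⟨hyS, hy⟩ => ?_
    have := hu.1 y hyS (u p) hy
    rw [nhdsWithin_eq_nhds.2 (hS.mem_nhds hyS)] at this
    filter_upwards [hS.mem_nhds hyS, this] with w hwS hw using ⟨hwS, hw⟩
  by_contra hne
  obtain ⟨w, -, ⟨-, hw₁⟩, -, hw₂⟩ := hconn _ _ hEq hLt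
    (fun y hy => (hle y hy).eq_or_lt.imp (fun h => ⟨hy, h⟩) fun h => ⟨hy, h⟩)
    ⟨p, hp, hp, rfl⟩ ⟨z, hz, hz, (hle z hz).lt_of_ne hne⟩
  exact hw₂.ne hw₁

theorem sub {h : ℂ → ℝ} (hu : SubharmonicOn u S) (hbdd : BddBelow (u '' S))
    (hh : HarmonicOnSet h S) : SubharmonicOn (u - h) S := by
  refine ⟨hu.1.add hh.1.neg.upperSemicontinuousOn, fun c r hr hball => ?_⟩
  have hsph : sphere c |r| ⊆ S := by
    rw [abs_of_pos hr]; exact sphere_subset_closedBall.trans hball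
  change u c - h c ≤ circleAverage (u - h) c r
  rw [circleAverage_sub ((hu.1.mono hsph).circleIntegrable (hbdd.mono (image_mono hsph)))
    ((hh.1.mono hsph).circleIntegrable')]
  exact sub_le_sub (hu.2 c r hr hball) (hh.2 c r hr hball).ge

theorem le_const_add_mul_log_norm_sub (hu : SubharmonicOn u {w₀}ᶜ) (hbdd : BddBelow (u '' {w₀}ᶜ))
    {r s a b : ℝ} (hr : 0 < r) (hs : 0 < s)
    (hbound : ∀ z, ‖z - w₀‖ = r ∨ ‖z - w₀‖ = s → u z ≤ a + b * log ‖z - w₀‖)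
    {z : ℂ} (hz : ‖z - w₀‖ ∈ uIcc r s) : u z ≤ a + b * log ‖z - w₀‖ := by
  set h : ℂ → ℝ := fun z => a + b * log ‖z - w₀‖
  have hh : HarmonicOnSet h {w₀}ᶜ := harmonicOnSet_const_add_mul_log_norm_sub a b w₀
  have hcont : Continuous fun z : ℂ => ‖z - w₀‖ := by fun_prop
  set K := (fun z : ℂ => ‖z - w₀‖) ⁻¹' uIcc r s
  have hKS : K ⊆ {w₀}ᶜ := fun z hz hzw => by
    have : r ⊓ s ≤ ‖z - w₀‖ := hz.1
    rw [mem_singleton_iff.1 hzw, sub_self, norm_zero] at this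
    exact (lt_inf_iff.2 ⟨hr, hs⟩).not_ge this
  have hK : IsCompact K :=
    (isCompact_closedBall w₀ (r ⊔ s)).of_isClosed_subset (isClosed_Icc.preimage hcont)
      fun z hz => mem_closedBall.2 ((dist_eq_norm z w₀).trans_le hz.2)
  obtain ⟨mu, hmu⟩ := hbdd
  obtain ⟨mh, hmh⟩ := hK.bddAbove_image (hh.1.mono hKS)
  have hbddK : BddBelow ((u - h) '' K) := ⟨mu - mh, by
    rintro _ ⟨w, hw, rfl⟩
    exact sub_le_sub (hmu (mem_image_of_mem u (hKS hw))) (hmh (mem_image_of_mem h hw))⟩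
  have hfr : ∀ w ∈ frontier K, (u - h) w ≤ 0 := by
    intro w hw
    have hw' := hcont.frontier_preimage_subset _ hw
    rw [uIcc, frontier_Icc inf_le_sup] at hw'
    have hrs : ‖w - w₀‖ = r ∨ ‖w - w₀‖ = s := by
      rcases hw' with hw' | hw'
      · exact (min_choice r s).imp hw'.trans hw'.trans
      · exact (max_choice r s).imp (hw' : ‖w - w₀‖ = _).trans (hw' : ‖w - w₀‖ = _).trans
    exact sub_nonpos.2 (hbound w hrs)
  exact sub_nonpos.1 ((hu.sub ⟨mu, hmu⟩ hh).le_of_forall_mem_frontier_le hK hKS hbddK hfr hz)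

theorem le_add_div_of_isMaxOn_sphere (hu : SubharmonicOn u {w₀}ᶜ)
    (hbdd : BddBelow (u '' {w₀}ᶜ)) {M : ℝ} (hM : ∀ w ≠ w₀, u w ≤ M) {r : ℝ} (hr : 0 < r)
    {p : ℂ} (hmax : IsMaxOn u (sphere w₀ r) p) {z : ℂ} (hz : z ≠ w₀) (hzr : ‖z - w₀‖ ≠ r)
    {k : ℝ} (hk : 1 ≤ k) : u z ≤ u p + (M - u p) / k := by
  have ht : 0 < ‖z - w₀‖ := norm_pos_iff.2 (sub_ne_zero.2 hz)
  set ℓ := log ‖z - w₀‖ - log r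
  have hℓ : ℓ ≠ 0 := sub_ne_zero.2 fun h => hzr (log_injOn_pos ht hr h)
  -- `u p + b (log ‖· - w₀‖ - log r)` is `u p` at radius `r` and `M` at radius `s`
  set s := r * exp (k * ℓ)
  set b := (M - u p) / (k * ℓ)
  have hb : b * (k * ℓ) = M - u p := div_mul_cancel₀ _ (mul_ne_zero (by linarith) hℓ)
  have hbound : ∀ w, ‖w - w₀‖ = r ∨ ‖w - w₀‖ = s →
      u w ≤ (u p - b * log r) + b * log ‖w - w₀‖ := by
    rintro w (hw | hw) <;> rw [hw]
    · simpa using hmax (mem_sphere.2 ((dist_eq_norm w w₀).trans hw))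
    · have hwM := hM w fun h => by
        simp only [h, sub_self, norm_zero] at hw
        exact (mul_pos hr (exp_pos _)).ne hw
      rw [log_mul hr.ne' (exp_pos _).ne', log_exp]
      linarith
  have htmem : ‖z - w₀‖ ∈ uIcc r s := by
    have : ‖z - w₀‖ = r * exp ℓ := by rw [exp_sub, exp_log ht, exp_log hr]; field_simp
    exact this ▸ mul_exp_mem_uIcc hr.le hk ℓ
  have hz_le := hu.le_const_add_mul_log_norm_sub hbdd hr (by positivity) hbound htmem
  have hbℓ : b * ℓ = (M - u p) / k := by rw [div_mul_eq_mul_div, mul_div_mul_right _ _ hℓ]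
  have : b * ℓ = b * log ‖z - w₀‖ - b * log r := mul_sub _ _ _
  linarith

theorem isMaxOn_of_isMaxOn_sphere (hu : SubharmonicOn u {w₀}ᶜ) (hbdd : BddBelow (u '' {w₀}ᶜ))
    (hbdd' : BddAbove (u '' {w₀}ᶜ)) {r : ℝ} (hr : 0 < r) {p : ℂ} (hp : p ∈ sphere w₀ r)
    (hmax : IsMaxOn u (sphere w₀ r) p) : IsMaxOn u {w₀}ᶜ p := by
  intro z hz
  change u z ≤ u p
  obtain ⟨M, hM⟩ := hbdd'
  have hM' : ∀ w ≠ w₀, u w ≤ M := fun w hw => hM (mem_image_of_mem u hw)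
  rcases eq_or_ne ‖z - w₀‖ r with hzr | hzr
  · exact hmax (mem_sphere.2 ((dist_eq_norm z w₀).trans hzr))
  refine le_of_forall_pos_le_add fun ε hε => ?_
  have hpM : u p ≤ M := hM' p (ne_of_mem_sphere hp hr.ne')
  have hk : 1 ≤ (M - u p) / ε + 1 := le_add_of_nonneg_left (div_nonneg (sub_nonneg.2 hpM) hε.le)
  have hz_le := hu.le_add_div_of_isMaxOn_sphere hbdd hM' hr hmax hz hzr hk
  have : (M - u p) / ((M - u p) / ε + 1) ≤ ε := by
    rw [div_le_iff₀ (by linarith), mul_add, mul_div_cancel₀ _ hε.ne', mul_one]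
    linarith
  linarith

end SubharmonicOn

theorem stmt4_general (u : ℂ → ℝ) (w₀ : ℂ)
    (hsub : SubharmonicOn u {w₀}ᶜ)
    (hbdd : ∃ M : ℝ, ∀ w, w ≠ w₀ → |u w| ≤ M) :
    ∃ c : ℝ, ∀ w, w ≠ w₀ → u w = c := by
  obtain ⟨M, hM⟩ := hbdd
  have hbelow : BddBelow (u '' {w₀}ᶜ) :=
    ⟨-M, by rintro _ ⟨w, hw, rfl⟩; exact neg_le_of_abs_le (hM w hw)⟩
  have habove : BddAbove (u '' {w₀}ᶜ) :=
    ⟨M, by rintro _ ⟨w, hw, rfl⟩; exact le_of_abs_le (hM w hw)⟩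
  have hsphere : sphere w₀ 1 ⊆ {w₀}ᶜ := fun w hw => ne_of_mem_sphere hw one_ne_zero
  obtain ⟨p, hp, hpmax⟩ := (hsub.1.mono hsphere).exists_isMaxOn
    (NormedSpace.sphere_nonempty.2 zero_le_one) (isCompact_sphere w₀ 1)
  have hconn : IsPreconnected ({w₀}ᶜ : Set ℂ) :=
    (isConnected_compl_singleton_of_one_lt_rank (by simp [Complex.rank_real_complex]) w₀)
      |>.isPreconnected
  exact ⟨u p, fun w hw => hsub.eq_of_isMaxOn isOpen_compl_singleton hconn hbelow (hsphere hp)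
    (hsub.isMaxOn_of_isMaxOn_sphere hbelow habove one_pos hp hpmax) hw⟩

theorem stmt4 (u : ℂ → ℝ) (w₀ : ℂ)
    (hsub : SubharmonicOn u {w₀}ᶜ)
    (hbdd : ∃ M : ℝ, ∀ w, w ≠ w₀ → |u w| ≤ M)
    (hlog : HarmonicOnSet (fun w => Real.log (u w)) {w | w ≠ w₀ ∧ 0 < u w})
    (hnear : ∃ M₁ : ℝ, ∀ᶠ w in nhdsWithin w₀ {w₀}ᶜ, u w ≤ M₁)
    (hinf : ∃ M₂ : ℝ, ∀ᶠ w in Filter.comap (fun z : ℂ => ‖z‖) Filter.atTop, u w ≤ M₂) :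
    ∃ c : ℝ, ∀ w, w ≠ w₀ → u w = c :=
  stmt4_general u w₀ hsub hbdd
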